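/- Drift over a pair of phases AM+OI. Consider the MMAHH with acceptance operators OI and AM on f = OneMax, with p, q ∈ (0,1), started from an arbitrary x_0 ∈ L_i with i ∈ [0..n] and s_0 = AM. Setting Δ_i = (2i − n)/(2 + q(n − 2)), one has E[y_0 − y_{T_s^{(2)}}] = Δ_i + (i − Δ_i)/(1 + p(n − 1)); that is, the drift over a phase of AM followed by a phase of OI is obtained by plugging the average position i − Δ_i after the AM phase into the affine OI-phase drift z ↦ z/(1 + p(n − 1)). -/

import Mathlib

open MeasureTheory
open scoped ENNReal NNReal

namespace MMAHHStmt

/-- The two acceptance operators. -/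
inductive Op : Type
  | OI : Op
  | AM : Op
  deriving DecidableEq

instance : MeasurableSpace Op := ⊤

/-- Search points: bit-strings of length `n`. -/
abbrev Point (n : ℕ) := Fin n → Bool

/-- The number of one-bits of a bit-string. -/
def ones {n : ℕ} (x : Point n) : ℕ := (Finset.univ.filter fun i => x i = true).card

/-- The all-ones string, the global optimum of all benchmarks considered. -/
def optimum (n : ℕ) : Point n := fun _ => true

/-- Flipping the bit in position `v`. -/
def flipBit {n : ℕ} (x : Point n) (v : Fin n) : Point n := Function.update x v (!(x v))

open Classical in
/-- The search point obtained from `x` by proposing to flip bit `v` and applying the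
acceptance operator `op` for the objective function `f`. -/
noncomputable def movedPoint {n : ℕ} (f : Point n → ℝ) (op : Op) (x : Point n) (v : Fin n) :
    Point n :=
  match op with
  | Op.OI => if f x < f (flipBit x v) then flipBit x v else x
  | Op.AM => flipBit x v

open Classical in
/-- One-step transition probability of the search point under acceptance operator `op`:
a uniformly random bit is flipped and the move is accepted or rejected according to `op`. -/
noncomputable def moveProb {n : ℕ} (f : Point n → ℝ) (op : Op) (x x' : Point n) : ℝ≥0∞ :=
  ((Finset.univ.filter fun v => movedPoint f op x v = x').card : ℝ≥0∞) / n

/-- Transition probabilities of the two-state Markov chain on the acceptance operators. -/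
noncomputable def switchProb (p q : ℝ) : Op → Op → ℝ≥0∞
  | Op.OI, Op.OI => ENNReal.ofReal (1 - p)
  | Op.OI, Op.AM => ENNReal.ofReal p
  | Op.AM, Op.OI => ENNReal.ofReal q
  | Op.AM, Op.AM => ENNReal.ofReal (1 - q)

/-- One-step transition probabilities of the MMAHH on the state space
`Point n × Op`: the search point moves according to the current acceptance operator, and,
independently, the operator switches according to the two-state Markov chain. -/
noncomputable def mmahhTrans {n : ℕ} (f : Point n → ℝ) (p q : ℝ) :
    Point n × Op → Point n × Op → ℝ≥0∞ :=
  fun s s' => moveProb f s.2 s.1 s'.1 * switchProb p q s.2 s'.2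

/-- `X` is (a version of) the MMAHH Markov chain with objective function `f` and switching
probabilities `p` and `q`, under the measure `μ`: each `X t` is measurable, and conditionally
on any history, the next state is distributed according to `mmahhTrans`. -/
def IsMMAHH {n : ℕ} {Ω : Type*} [MeasurableSpace Ω] (μ : Measure Ω)
    (X : ℕ → Ω → Point n × Op) (f : Point n → ℝ) (p q : ℝ) : Prop :=
  (∀ t, Measurable (X t)) ∧
  ∀ (t : ℕ) (σ : ℕ → Point n × Op) (s' : Point n × Op),
    μ {ω | (∀ i ≤ t, X i ω = σ i) ∧ X (t + 1) ω = s'}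
      = μ {ω | ∀ i ≤ t, X i ω = σ i} * mmahhTrans f p q (σ t) s'

/-- The runtime: the first hitting time of the global optimum, as an extended natural number
(`⊤` if the optimum is never reached). -/
noncomputable def hitTime {n : ℕ} {Ω : Type*} (X : ℕ → Ω → Point n × Op) (ω : Ω) : ℕ∞ :=
  ⨅ t ∈ {t : ℕ | (X t ω).1 = optimum n}, (t : ℕ∞)

/-- The `k`-th switching time between the two acceptance operators (with junk value given by
`Nat.sInf ∅ = 0` on the probability-zero event that no further switch occurs). -/
noncomputable def switchTime {n : ℕ} {Ω : Type*} (X : ℕ → Ω → Point n × Op) : ℕ → Ω → ℕ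
  | 0, _ => 0
  | k + 1, ω =>
      sInf {t : ℕ | switchTime X k ω ≤ t ∧ (X t ω).2 ≠ (X (switchTime X k ω) ω).2}

/-- The OneMax benchmark. -/
noncomputable def OneMax (n : ℕ) (x : Point n) : ℝ := (ones x : ℝ)

/-!
Fix the phase lengths: on the event that the AM phase lasts `a + 1` steps and the OI phase
`b + 1` steps, the law of the path factorises into the switching weight
`(1 - q) ^ a * q * ((1 - p) ^ b * p)` times the path weights of the move matrices of the two
operators. On OneMax, `gap - n / 2` is an eigenvector of the AM move matrix (eigenvalue
`1 - 2 / n`) and `gap` is one of the OI move matrix (eigenvalue `1 - 1 / n`), so given the phase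
lengths the expected gap at the second switch is
`(1 - 1 / n) ^ (b + 1) * ((1 - 2 / n) ^ (a + 1) * (i - n / 2) + n / 2)`. Summing the two
geometric series over `a` and `b` gives the formula. Paths without a second switch contribute
nothing, since there `switchTime X 2 = 0` and the drift vanishes.
-/

instance : Fintype Op := ⟨{.OI, .AM}, fun o => by cases o <;> simp⟩

instance : DiscreteMeasurableSpace Op := ⟨fun _ => MeasurableSpace.measurableSet_top⟩

section PathSum

open Matrix

variable {S : Type*} [Fintype S]

def pathWeight {m : ℕ} (ν : S → ℝ) (M : Fin m → Matrix S S ℝ) (σ : Fin (m + 1) → S) : ℝ :=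
  ν (σ 0) * ∏ t, M t (σ t.castSucc) (σ t.succ)

theorem sum_pathWeight_mul [DecidableEq S] (m : ℕ) (ν : S → ℝ) (M : Fin m → Matrix S S ℝ)
    (g : S → ℝ) :
    ∑ σ, pathWeight ν M σ * g (σ (Fin.last m)) = ν ⬝ᵥ ((List.ofFn M).prod *ᵥ g) := by
  induction m generalizing ν with
  | zero =>
    rw [List.ofFn_zero, List.prod_nil, one_mulVec]
    exact Fintype.sum_equiv (Equiv.funUnique (Fin 1) S) _ _ fun σ => by
      simp [pathWeight, Fin.last, Equiv.funUnique]
  | succ m ih =>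
    rw [← (Fin.consEquiv fun _ => S).sum_comp, Fintype.sum_prod_type, List.ofFn_succ,
      List.prod_cons, ← mulVec_mulVec]
    refine Finset.sum_congr rfl fun s _ => ?_
    rw [mulVec, ← ih (M 0 s) (fun t => M t.succ), Finset.mul_sum]
    refine Finset.sum_congr rfl fun σ _ => ?_
    simp only [pathWeight, Fin.consEquiv_apply, Fin.prod_univ_succ, Fin.cons_zero,
      Fin.castSucc_zero, Fin.cons_succ, ← Fin.succ_castSucc, ← Fin.succ_last]
    ring

end PathSum

section PathLaw

variable {S Ω : Type*} [MeasurableSpace Ω]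

def IsMarkovChain (μ : Measure Ω) (X : ℕ → Ω → S) (P : S → S → ℝ≥0∞) : Prop :=
  ∀ (t : ℕ) (σ : ℕ → S) (s' : S), μ {ω | (∀ i ≤ t, X i ω = σ i) ∧ X (t + 1) ω = s'}
    = μ {ω | ∀ i ≤ t, X i ω = σ i} * P (σ t) s'

variable {μ : Measure Ω} {X : ℕ → Ω → S} {P : S → S → ℝ≥0∞}

theorem measure_forall_le_eq_mul_prod (hP : IsMarkovChain μ X P) (σ : ℕ → S) (m : ℕ) :
    μ {ω | ∀ i ≤ m, X i ω = σ i}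
      = μ {ω | X 0 ω = σ 0} * ∏ t ∈ Finset.range m, P (σ t) (σ (t + 1)) := by
  induction m with
  | zero => simp
  | succ m ih =>
    have hsplit : {ω | ∀ i ≤ m + 1, X i ω = σ i}
        = {ω | (∀ i ≤ m, X i ω = σ i) ∧ X (m + 1) ω = σ (m + 1)} := by
      ext ω
      simp only [Set.mem_ofPred_eq, Nat.le_succ_iff, or_imp, forall_and, forall_eq]
    rw [hsplit, hP, ih, Finset.prod_range_succ, mul_assoc]

theorem measureReal_path_eq (hP : IsMarkovChain μ X P) {m : ℕ} (σ : Fin (m + 1) → S) :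
    μ.real {ω | (fun t : Fin (m + 1) => X t ω) = σ}
      = pathWeight (fun s => μ.real {ω | X 0 ω = s})
          (fun _ => .of fun s s' => (P s s').toReal) σ := by
  have hpath : {ω | (fun t : Fin (m + 1) => X t ω) = σ}
      = {ω | ∀ i ≤ m, X i ω = σ (Fin.clamp i m)} := by
    ext ω
    simp only [Set.mem_ofPred_eq, funext_iff]
    refine ⟨fun h i hi => ?_, fun h t => ?_⟩
    · simpa [Fin.clamp, hi] using h (Fin.clamp i m)
    · simpa [Fin.clamp, Nat.lt_succ_iff.mp t.2] using h t (Nat.lt_succ_iff.mp t.2)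
  unfold pathWeight
  rw [hpath, measureReal_def, measure_forall_le_eq_mul_prod hP, ENNReal.toReal_mul,
    ENNReal.toReal_prod, ← Fin.prod_univ_eq_prod_range]
  congr 1
  refine Finset.prod_congr rfl fun t _ => ?_
  congr 3 <;> ext <;> simp [Fin.clamp, Nat.succ_le_of_lt t.2, t.2.le]

theorem integral_comp_path [MeasurableSpace S] [MeasurableSingletonClass S] [Fintype S]
    [IsFiniteMeasure μ] (hX : ∀ t, Measurable (X t)) (hP : IsMarkovChain μ X P) (m : ℕ)
    (h : (Fin (m + 1) → S) → ℝ) :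
    ∫ ω, h (fun t => X t ω) ∂μ
      = ∑ σ, pathWeight (fun s => μ.real {ω | X 0 ω = s})
          (fun _ => .of fun s s' => (P s s').toReal) σ * h σ := by
  have hpath : Measurable fun ω (t : Fin (m + 1)) => X t ω := measurable_pi_lambda _ fun t => hX t
  rw [← integral_map hpath.aemeasurable Integrable.of_finite.aestronglyMeasurable,
    integral_fintype Integrable.of_finite]
  refine Finset.sum_congr rfl fun σ _ => ?_
  rw [map_measureReal_apply hpath (measurableSet_singleton σ), smul_eq_mul]
  exact congrArg (· * h σ) (measureReal_path_eq hP σ)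

end PathLaw

section Switching

variable {α : Type*} {s : ℕ → α} {k T : ℕ}

noncomputable def nextChange (s : ℕ → α) (k : ℕ) : ℕ := sInf {t | k ≤ t ∧ s t ≠ s k}

theorem nextChange_eq (hkT : k ≤ T) (hT : s T ≠ s k)
    (hconst : ∀ t, k ≤ t → t < T → s t = s k) : nextChange s k = T :=
  le_antisymm (Nat.sInf_le ⟨hkT, hT⟩)
    (le_csInf ⟨T, hkT, hT⟩ fun t ht => not_lt.1 fun hlt => ht.2 (hconst t ht.1 hlt))

theorem nextChange_spec (h : nextChange s k ≠ 0) :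
    k < nextChange s k ∧ s (nextChange s k) ≠ s k ∧
      ∀ t, k ≤ t → t < nextChange s k → s t = s k := by
  have hne : {t | k ≤ t ∧ s t ≠ s k}.Nonempty :=
    Set.nonempty_iff_ne_empty.2 fun he => h (by rw [nextChange, he, Nat.sInf_empty])
  obtain ⟨hk, hs⟩ := Nat.sInf_mem hne
  refine ⟨lt_of_le_of_ne hk fun heq => hs (congrArg s heq.symm), hs, fun t hkt hlt => ?_⟩
  by_contra hst
  exact Nat.notMem_of_lt_sInf hlt ⟨hkt, hst⟩

variable {n : ℕ} {Ω : Type*} (X : ℕ → Ω → Point n × Op)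

theorem switchTime_succ (k : ℕ) (ω : Ω) :
    switchTime X (k + 1) ω = nextChange (fun t => (X t ω).2) (switchTime X k ω) := rfl

def phaseOps (a b t : ℕ) : Op := if t ≤ a then .AM else if t ≤ a + b + 1 then .OI else .AM

theorem phaseOps_of_le {a b t : ℕ} (h : t ≤ a) : phaseOps a b t = .AM := if_pos h

theorem phaseOps_of_lt_of_le {a b t : ℕ} (h₁ : a < t) (h₂ : t ≤ a + b + 1) :
    phaseOps a b t = .OI := by
  rw [phaseOps, if_neg (by omega), if_pos h₂]

theorem phaseOps_of_lt {a b t : ℕ} (h : a + b + 1 < t) : phaseOps a b t = .AM := by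
  rw [phaseOps, if_neg (by omega), if_neg (by omega)]

def opsSet (ops : ℕ → Op) (m : ℕ) : Set Ω := {ω | ∀ t ≤ m, (X t ω).2 = ops t}

/-- Phases of lengths `ab.1 + 1` (AM) and `ab.2 + 1` (OI), followed by a switch back to AM. -/
def phaseSet (ab : ℕ × ℕ) : Set Ω := opsSet X (phaseOps ab.1 ab.2) (ab.1 + 1 + (ab.2 + 1))

variable {X}

theorem switchTime_of_mem_phaseSet {ab : ℕ × ℕ} {ω : Ω} (h : ω ∈ phaseSet X ab) :
    switchTime X 1 ω = ab.1 + 1 ∧ switchTime X 2 ω = ab.1 + 1 + (ab.2 + 1) := by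
  obtain ⟨a, b⟩ := ab
  have hs : ∀ t ≤ a + 1 + (b + 1), (X t ω).2 = phaseOps a b t := h
  have h1 : switchTime X 1 ω = a + 1 := by
    refine nextChange_eq (k := 0) (by omega) ?_ fun t _ ht => ?_
    · rw [hs _ (by omega), hs _ (by omega), phaseOps_of_lt_of_le (by omega) (by omega),
        phaseOps_of_le (by omega)]
      decide
    · rw [hs _ (by omega), hs _ (by omega), phaseOps_of_le (by omega), phaseOps_of_le (by omega)]
  refine ⟨h1, ?_⟩
  rw [switchTime_succ, h1]
  refine nextChange_eq (by omega) ?_ fun t ht ht' => ?_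
  · rw [hs _ le_rfl, hs _ (by omega), phaseOps_of_lt (by omega),
      phaseOps_of_lt_of_le (by omega) (by omega)]
    decide
  · rw [hs _ (by omega), hs _ (by omega), phaseOps_of_lt_of_le (by omega) (by omega),
      phaseOps_of_lt_of_le (by omega) (by omega)]

theorem exists_mem_phaseSet {ω : Ω} (h0 : (X 0 ω).2 = .AM) (h2 : switchTime X 2 ω ≠ 0) :
    ∃ ab, ω ∈ phaseSet X ab := by
  set s : ℕ → Op := fun t => (X t ω).2
  change nextChange s (nextChange s 0) ≠ 0 at h2
  have h1 : nextChange s 0 ≠ 0 := fun h => h2 (by rw [h]; exact h)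
  obtain ⟨h1lt, h1ne, h1c⟩ := nextChange_spec h1
  obtain ⟨h2lt, h2ne, h2c⟩ := nextChange_spec h2
  set T1 := nextChange s 0
  set T2 := nextChange s T1
  have hT1 : s T1 = .OI := by
    cases h : s T1 with
    | OI => rfl
    | AM => exact absurd (h.trans h0.symm) h1ne
  have hT2 : s T2 = .AM := by
    cases h : s T2 with
    | AM => rfl
    | OI => exact absurd (h.trans hT1.symm) h2ne
  refine ⟨(T1 - 1, T2 - T1 - 1), fun t ht => ?_⟩
  change s t = phaseOps (T1 - 1) (T2 - T1 - 1) t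
  rcases lt_or_ge t T1 with ht1 | ht1
  · rw [phaseOps_of_le (by omega)]
    exact (h1c t t.zero_le ht1).trans h0
  rcases lt_or_ge t T2 with ht2 | ht2
  · rw [phaseOps_of_lt_of_le (by omega) (by omega)]
    exact (h2c t ht1 ht2).trans hT1
  · rw [phaseOps_of_lt (by omega), show t = T2 by omega]
    exact hT2

theorem pairwise_disjoint_phaseSet : Pairwise (Function.onFun Disjoint (phaseSet X)) := by
  intro ab cd hne
  refine Set.disjoint_left.2 fun ω h h' => hne ?_
  obtain ⟨h1, h2⟩ := switchTime_of_mem_phaseSet h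
  obtain ⟨h1', h2'⟩ := switchTime_of_mem_phaseSet h'
  ext <;> omega

end Switching

section OneMaxKernel

open Matrix

variable {n : ℕ}

noncomputable def gap (x : Point n) : ℝ := n - ones x

theorem ones_le (x : Point n) : ones x ≤ n := (Finset.card_filter_le _ _).trans (by simp)

theorem gap_nonneg (x : Point n) : 0 ≤ gap x := by
  rw [gap, sub_nonneg]
  exact_mod_cast ones_le x

theorem gap_le (x : Point n) : gap x ≤ n := by
  rw [gap, sub_le_self_iff]
  exact Nat.cast_nonneg _

noncomputable def moveMatrix (f : Point n → ℝ) (op : Op) : Matrix (Point n) (Point n) ℝ :=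
  .of fun x x' => (moveProb f op x x').toReal

theorem moveMatrix_mulVec (f : Point n → ℝ) (op : Op) (g : Point n → ℝ) (x : Point n) :
    (moveMatrix f op *ᵥ g) x = (∑ v, g (movedPoint f op x v)) / n := by
  simp only [mulVec, dotProduct, moveMatrix, Matrix.of_apply, moveProb, ENNReal.toReal_div,
    ENNReal.toReal_natCast, div_mul_eq_mul_div, ← Finset.sum_div]
  congr 1
  rw [← Finset.sum_fiberwise Finset.univ (movedPoint f op x) fun v => g (movedPoint f op x v)]
  refine Finset.sum_congr rfl fun x' _ => ?_
  rw [Finset.sum_congr rfl fun v hv => by rw [(Finset.mem_filter.1 hv).2], Finset.sum_const,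
    nsmul_eq_mul]

theorem moveMatrix_mulVec_one [NeZero n] (f : Point n → ℝ) (op : Op) :
    moveMatrix f op *ᵥ 1 = 1 := by
  ext x
  simp [moveMatrix_mulVec, NeZero.ne]

theorem natCast_ones (x : Point n) : (ones x : ℝ) = ∑ v, if x v then 1 else 0 := by
  rw [ones, Finset.natCast_card_filter]

theorem gap_eq_sum (x : Point n) : gap x = ∑ v, if x v then 0 else 1 := by
  have hn : (n : ℝ) = ∑ _v : Fin n, 1 := by simp
  rw [gap, natCast_ones, hn, ← Finset.sum_sub_distrib]
  exact Finset.sum_congr rfl fun v _ => by split_ifs <;> norm_num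

theorem gap_flipBit (x : Point n) (v : Fin n) :
    gap (flipBit x v) = gap x + if x v then 1 else -1 := by
  have hrest : ∑ j ∈ {v}ᶜ, (if flipBit x v j then (1 : ℝ) else 0)
      = ∑ j ∈ {v}ᶜ, if x j then 1 else 0 :=
    Finset.sum_congr rfl fun j hj => by
      rw [flipBit, Function.update_of_ne (by simpa using hj)]
  rw [gap, gap, natCast_ones, natCast_ones, Fintype.sum_eq_add_sum_compl v,
    Fintype.sum_eq_add_sum_compl v fun j => if x j then (1 : ℝ) else 0, hrest]
  rw [show flipBit x v v = !x v from Function.update_self ..]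
  cases x v <;> norm_num <;> ring

theorem movedPoint_oneMax_OI (x : Point n) (v : Fin n) :
    movedPoint (OneMax n) .OI x v = if x v then x else flipBit x v := by
  have h := gap_flipBit x v
  unfold gap at h
  cases hv : x v <;> rw [hv] at h <;> norm_num at h
  · have hlt : OneMax n x < OneMax n (flipBit x v) := by simp only [OneMax]; linarith
    simp [movedPoint, hlt]
  · have hlt : ¬ OneMax n x < OneMax n (flipBit x v) := by simp only [OneMax]; linarith
    simp [movedPoint, hlt]

theorem moveMatrix_OI_mulVec_gap [NeZero n] :
    moveMatrix (OneMax n) .OI *ᵥ gap = (1 - 1 / n : ℝ) • gap := by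
  ext x
  have hstep : ∀ v, gap (movedPoint (OneMax n) .OI x v) = gap x - if x v then 0 else 1 := by
    intro v
    rw [movedPoint_oneMax_OI]
    cases hv : x v <;> simp [gap_flipBit, hv, sub_eq_add_neg]
  rw [moveMatrix_mulVec, Finset.sum_congr rfl fun v _ => hstep v, Finset.sum_sub_distrib,
    ← gap_eq_sum]
  simp
  field_simp [NeZero.ne]

theorem moveMatrix_AM_mulVec_gap_sub [NeZero n] :
    moveMatrix (OneMax n) .AM *ᵥ (gap - fun _ => (n : ℝ) / 2)
      = (1 - 2 / n : ℝ) • (gap - fun _ => (n : ℝ) / 2) := by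
  ext x
  have hstep : ∀ v, gap (movedPoint (OneMax n) .AM x v) - n / 2
      = gap x + 1 - n / 2 - 2 * if x v then 0 else 1 := by
    intro v
    rw [movedPoint, gap_flipBit]
    split_ifs <;> ring
  rw [moveMatrix_mulVec]
  simp only [Pi.sub_apply, Pi.smul_apply, smul_eq_mul]
  rw [Finset.sum_congr rfl fun v _ => hstep v, Finset.sum_sub_distrib,
    ← Finset.mul_sum, ← gap_eq_sum]
  simp
  field_simp [NeZero.ne]
  ring

end OneMaxKernel

section Chain

open Matrix

variable {n : ℕ} {Ω : Type*} [MeasurableSpace Ω] {μ : Measure Ω} {X : ℕ → Ω → Point n × Op}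
  {f : Point n → ℝ} {p q : ℝ} {x0 : Point n}

theorem measurableSet_opsSet (hX : ∀ t, Measurable (X t)) (ops : ℕ → Op) (m : ℕ) :
    MeasurableSet (opsSet X ops m) := by
  simp only [opsSet, Set.ofPred_forall]
  exact .iInter fun t => .iInter fun _ =>
    hX t (Set.toFinite {s : Point n × Op | s.2 = ops t}).measurableSet

theorem ae_eq_initial [IsProbabilityMeasure μ] (hX : ∀ t, Measurable (X t))
    (hinit : μ {ω | X 0 ω = (x0, .AM)} = 1) : ∀ᵐ ω ∂μ, X 0 ω = (x0, .AM) :=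
  ae_iff.2 ((prob_compl_eq_zero_iff (hX 0 (measurableSet_singleton _))).2 hinit)

theorem measureReal_initial [IsProbabilityMeasure μ] (hX : ∀ t, Measurable (X t))
    (hinit : μ {ω | X 0 ω = (x0, .AM)} = 1) :
    (fun s => μ.real {ω | X 0 ω = s}) = Pi.single (x0, .AM) 1 := by
  ext s
  rcases eq_or_ne s (x0, .AM) with rfl | hs
  · simp [measureReal_def, hinit]
  · have hsub : {ω | X 0 ω = s} ⊆ {ω | ¬X 0 ω = (x0, .AM)} := fun ω h h' => hs (h.symm.trans h')
    rw [Pi.single_eq_of_ne hs, measureReal_def,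
      measure_mono_null hsub (ae_iff.1 (ae_eq_initial hX hinit)), ENNReal.toReal_zero]

theorem setIntegral_opsSet [IsProbabilityMeasure μ] (hchain : IsMMAHH μ X f p q)
    (hinit : μ {ω | X 0 ω = (x0, .AM)} = 1) {ops : ℕ → Op} (h0 : ops 0 = .AM) (m : ℕ)
    (g : Point n → ℝ) :
    ∫ ω in opsSet X ops m, g (X m ω).1 ∂μ
      = (∏ t : Fin m, (switchProb p q (ops t) (ops (t + 1))).toReal)
        * ((List.ofFn fun t : Fin m => moveMatrix f (ops t)).prod *ᵥ g) x0 := by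
  obtain ⟨hX, hP⟩ := hchain
  set h : (Fin (m + 1) → Point n × Op) → ℝ := fun σ =>
    if ∀ t, (σ t).2 = ops t then g (σ (Fin.last m)).1 else 0
  have hind : (opsSet X ops m).indicator (fun ω => g (X m ω).1)
      = fun ω => h fun t => X t ω := by
    ext ω
    simp only [Set.indicator, opsSet, h, Set.mem_ofPred_eq, Fin.val_last]
    congr 1
    exact propext ⟨fun hω t => hω t (Nat.lt_succ_iff.mp t.2),
      fun hω t ht => hω ⟨t, Nat.lt_succ_of_le ht⟩⟩
  rw [← integral_indicator (measurableSet_opsSet hX ops m), hind, integral_comp_path hX hP,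
    measureReal_initial hX hinit]
  -- only the paths whose operator component is `ops` contribute
  have hpaths := Fintype.sum_of_injective (fun (pts : Fin (m + 1) → Point n) t => (pts t, ops t))
    (fun pts pts' he => funext fun t => congrArg Prod.fst (congrFun he t))
    (fun pts => pathWeight (Pi.single (x0, .AM) 1)
      (fun _ => .of fun s s' => (mmahhTrans f p q s s').toReal) (fun t => (pts t, ops t))
        * h fun t => (pts t, ops t))
    (fun σ => pathWeight (Pi.single (x0, .AM) 1)
      (fun _ => .of fun s s' => (mmahhTrans f p q s s').toReal) σ * h σ)
    (fun σ hσ => by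
      refine mul_eq_zero_of_right _ (if_neg fun hops => hσ ⟨fun t => (σ t).1, ?_⟩)
      exact funext fun t => Prod.ext rfl (hops t).symm)
    fun _ => rfl
  rw [← hpaths, ← single_dotProduct, ← sum_pathWeight_mul]
  refine Finset.sum_congr rfl fun pts _ => ?_
  simp only [h, pathWeight, mmahhTrans, Matrix.of_apply, ENNReal.toReal_mul,
    Finset.prod_mul_distrib, moveMatrix, Fin.val_castSucc, Fin.val_succ, if_pos fun _ => rfl]
  by_cases hx : pts 0 = x0 <;> simp [hx, h0, mul_comm]

end Chain

section Phases

open Matrix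

variable {n : ℕ}

theorem prod_ofFn_phaseOps {M : Type*} [Monoid M] (F : Op → M) (a b : ℕ) :
    (List.ofFn fun t : Fin (a + 1 + (b + 1)) => F (phaseOps a b t)).prod
      = F .AM ^ (a + 1) * F .OI ^ (b + 1) := by
  rw [List.ofFn_add, List.prod_append]
  simp only [Fin.val_castLE, Fin.val_natAdd]
  have hAM : (fun i : Fin (a + 1) => F (phaseOps a b i)) = fun _ => F .AM :=
    funext fun i => by rw [phaseOps_of_le (Nat.lt_succ_iff.mp i.2)]
  have hOI : (fun i : Fin (b + 1) => F (phaseOps a b (a + 1 + i))) = fun _ => F .OI :=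
    funext fun i => by rw [phaseOps_of_lt_of_le (by omega) (by omega)]
  rw [hAM, hOI, List.ofFn_const, List.ofFn_const, List.prod_replicate, List.prod_replicate]

theorem prod_switchProb_phaseOps {p q : ℝ} (hp0 : 0 ≤ p) (hp1 : p ≤ 1) (hq0 : 0 ≤ q)
    (hq1 : q ≤ 1) (a b : ℕ) :
    ∏ t : Fin (a + 1 + (b + 1)),
        (switchProb p q (phaseOps a b t) (phaseOps a b (t + 1))).toReal
      = (1 - q) ^ a * q * ((1 - p) ^ b * p) := by
  rw [Fin.prod_univ_eq_prod_range
    (fun t => (switchProb p q (phaseOps a b t) (phaseOps a b (t + 1))).toReal),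
    Finset.prod_range_add, Finset.prod_range_succ, Finset.prod_range_succ]
  have hAM : ∀ t ∈ Finset.range a,
      (switchProb p q (phaseOps a b t) (phaseOps a b (t + 1))).toReal = 1 - q := by
    intro t ht
    rw [Finset.mem_range] at ht
    rw [phaseOps_of_le (by omega), phaseOps_of_le (by omega)]
    simp [switchProb, hq1]
  have hOI : ∀ t ∈ Finset.range b, (switchProb p q (phaseOps a b (a + 1 + t))
      (phaseOps a b (a + 1 + t + 1))).toReal = 1 - p := by
    intro t ht
    rw [Finset.mem_range] at ht
    rw [phaseOps_of_lt_of_le (by omega) (by omega), phaseOps_of_lt_of_le (by omega) (by omega)]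
    simp [switchProb, hp1]
  rw [Finset.prod_congr rfl hAM, Finset.prod_congr rfl hOI, Finset.prod_const,
    Finset.prod_const, Finset.card_range, Finset.card_range, phaseOps_of_le le_rfl,
    phaseOps_of_lt_of_le (by omega) (by omega), phaseOps_of_lt_of_le (by omega) (by omega),
    phaseOps_of_lt (by omega)]
  simp [switchProb, hp0, hq0]

end Phases

section PhaseIntegral

open Matrix

theorem pow_mulVec_of_mulVec_eq_smul {R ι : Type*} [CommSemiring R] [Fintype ι] [DecidableEq ι]
    {A : Matrix ι ι R} {v : ι → R} {c : R} (h : A *ᵥ v = c • v) (k : ℕ) :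
    (A ^ k) *ᵥ v = c ^ k • v := by
  induction k with
  | zero => simp
  | succ k ih => rw [pow_succ, ← mulVec_mulVec, h, mulVec_smul, ih, smul_smul, pow_succ']

variable {n : ℕ} [NeZero n]

theorem moveMatrix_pow_mul_pow_mulVec_one (a b : ℕ) :
    (moveMatrix (OneMax n) .AM ^ a * moveMatrix (OneMax n) .OI ^ b) *ᵥ 1 = 1 := by
  have h1 : ∀ op k, (moveMatrix (OneMax n) op ^ k) *ᵥ 1 = 1 := fun op k => by
    simpa using pow_mulVec_of_mulVec_eq_smul (A := moveMatrix (OneMax n) op) (c := 1)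
      (by rw [moveMatrix_mulVec_one, one_smul]) k
  rw [← mulVec_mulVec, h1, h1]

theorem moveMatrix_pow_mul_pow_mulVec_gap (a b : ℕ) :
    (moveMatrix (OneMax n) .AM ^ a * moveMatrix (OneMax n) .OI ^ b) *ᵥ gap
      = (1 - 1 / n : ℝ) ^ b •
          ((1 - 2 / n : ℝ) ^ a • (gap - fun _ => (n : ℝ) / 2) + fun _ => (n : ℝ) / 2) := by
  have hconst : (moveMatrix (OneMax n) .AM ^ a) *ᵥ (fun _ => (n : ℝ) / 2)
      = fun _ => (n : ℝ) / 2 := by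
    have hsmul : (fun _ : Point n => (n : ℝ) / 2) = ((n : ℝ) / 2) • 1 := by
      ext
      simp
    rw [hsmul, mulVec_smul]
    simpa using congrArg (((n : ℝ) / 2) • ·) (moveMatrix_pow_mul_pow_mulVec_one (n := n) a 0)
  rw [← mulVec_mulVec, pow_mulVec_of_mulVec_eq_smul moveMatrix_OI_mulVec_gap, mulVec_smul]
  congr 1
  conv_lhs => rw [← sub_add_cancel gap fun _ => (n : ℝ) / 2]
  rw [mulVec_add, pow_mulVec_of_mulVec_eq_smul moveMatrix_AM_mulVec_gap_sub, hconst]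

variable {Ω : Type*} [MeasurableSpace Ω] {μ : Measure Ω} [IsProbabilityMeasure μ]
  {X : ℕ → Ω → Point n × Op} {p q : ℝ} {x0 : Point n}

theorem setIntegral_phaseSet_drift (hchain : IsMMAHH μ X (OneMax n) p q)
    (hinit : μ {ω | X 0 ω = (x0, .AM)} = 1) (hp0 : 0 ≤ p) (hp1 : p ≤ 1) (hq0 : 0 ≤ q)
    (hq1 : q ≤ 1) (ab : ℕ × ℕ) :
    ∫ ω in phaseSet X ab, (gap (X 0 ω).1 - gap (X (switchTime X 2 ω) ω).1) ∂μ
      = (1 - q) ^ ab.1 * q * ((1 - p) ^ ab.2 * p) * (gap x0 - (1 - 1 / n : ℝ) ^ (ab.2 + 1)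
          * ((1 - 2 / n : ℝ) ^ (ab.1 + 1) * (gap x0 - n / 2) + n / 2)) := by
  obtain ⟨a, b⟩ := ab
  have hX := hchain.1
  have hC : MeasurableSet (phaseSet X (a, b)) := measurableSet_opsSet hX _ _
  have hint : ∀ t, Integrable (fun ω => gap (X t ω).1) μ := fun t =>
    Integrable.of_finite.comp_measurable (g := fun s : Point n × Op => gap s.1) (hX t)
  have hphase := setIntegral_opsSet hchain hinit (phaseOps_of_le (b := b) a.zero_le)
    (a + 1 + (b + 1))
  simp only [prod_ofFn_phaseOps, prod_switchProb_phaseOps hp0 hp1 hq0 hq1] at hphase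
  have hmass : μ.real (phaseSet X (a, b)) = (1 - q) ^ a * q * ((1 - p) ^ b * p) := by
    simpa [moveMatrix_pow_mul_pow_mulVec_one, phaseSet] using hphase 1
  calc ∫ ω in phaseSet X (a, b), (gap (X 0 ω).1 - gap (X (switchTime X 2 ω) ω).1) ∂μ
      = ∫ ω in phaseSet X (a, b), (gap (X 0 ω).1 - gap (X (a + 1 + (b + 1)) ω).1) ∂μ :=
        setIntegral_congr_fun hC fun ω hω => by
          simp only [(switchTime_of_mem_phaseSet hω).2]
    _ = ∫ ω in phaseSet X (a, b), gap x0 ∂μ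
          - ∫ ω in phaseSet X (a, b), gap (X (a + 1 + (b + 1)) ω).1 ∂μ := by
        rw [integral_sub (hint 0).integrableOn (hint _).integrableOn]
        congr 1
        refine setIntegral_congr_ae hC ?_
        filter_upwards [ae_eq_initial hX hinit] with ω hω _
        rw [hω]
    _ = _ := by
        rw [setIntegral_const, hmass, phaseSet, hphase gap, moveMatrix_pow_mul_pow_mulVec_gap]
        simp only [Pi.smul_apply, Pi.add_apply, Pi.sub_apply, smul_eq_mul]
        ring

end PhaseIntegral

section Decomposition

variable {n : ℕ} {Ω : Type*} [MeasurableSpace Ω] {μ : Measure Ω} [IsProbabilityMeasure μ]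
  {X : ℕ → Ω → Point n × Op}

theorem hasSum_setIntegral_phaseSet (hX : ∀ t, Measurable (X t))
    (h0 : ∀ᵐ ω ∂μ, (X 0 ω).2 = .AM) :
    HasSum (fun ab => ∫ ω in phaseSet X ab, (gap (X 0 ω).1 - gap (X (switchTime X 2 ω) ω).1) ∂μ)
      (∫ ω, (gap (X 0 ω).1 - gap (X (switchTime X 2 ω) ω).1) ∂μ) := by
  set F := fun ω => gap (X 0 ω).1 - gap (X (switchTime X 2 ω) ω).1
  have hmeas : ∀ ab, AEStronglyMeasurable F (μ.restrict (phaseSet X ab)) := fun ab => by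
    have hG : Measurable fun ω => gap (X 0 ω).1 - gap (X (ab.1 + 1 + (ab.2 + 1)) ω).1 :=
      ((measurable_of_finite fun s : Point n × Op => gap s.1).comp (hX 0)).sub
        ((measurable_of_finite fun s : Point n × Op => gap s.1).comp (hX _))
    refine hG.aestronglyMeasurable.congr
      (ae_restrict_of_forall_mem (measurableSet_opsSet hX _ _) fun ω hω => ?_)
    simp only [F, (switchTime_of_mem_phaseSet hω).2]
  have hbound : ∀ ω, ‖F ω‖ ≤ n := fun ω => by
    rw [Real.norm_eq_abs, abs_le]
    constructor <;> linarith [gap_nonneg (X 0 ω).1, gap_le (X 0 ω).1,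
      gap_nonneg (X (switchTime X 2 ω) ω).1, gap_le (X (switchTime X 2 ω) ω).1]
  rw [← setIntegral_eq_integral_of_ae_compl_eq_zero (s := ⋃ ab, phaseSet X ab)]
  · exact hasSum_integral_iUnion (fun ab => measurableSet_opsSet hX _ _)
      pairwise_disjoint_phaseSet
      (Integrable.of_bound (aestronglyMeasurable_iUnion_iff.2 hmeas) n (ae_of_all _ hbound))
  · filter_upwards [h0] with ω hω hnot
    by_contra hF
    obtain ⟨ab, hab⟩ := exists_mem_phaseSet hω fun h2 => hF (by simp only [h2, sub_self])
    exact hnot (Set.mem_iUnion.2 ⟨ab, hab⟩)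

end Decomposition

theorem hasSum_mul_of_nonneg {ι κ : Type*} {f : ι → ℝ} {g : κ → ℝ} {s t : ℝ} (hf : HasSum f s)
    (hg : HasSum g t) (hf0 : 0 ≤ f) (hg0 : 0 ≤ g) :
    HasSum (fun x : ι × κ => f x.1 * g x.2) (s * t) :=
  hf.mul hg (hf.summable.mul_of_nonneg hg.summable hf0 hg0)

theorem hasSum_geometric_weight {c r : ℝ} (h0 : 0 ≤ (1 - c) * r) (h1 : (1 - c) * r < 1) :
    HasSum (fun k : ℕ => (1 - c) ^ k * c * r ^ (k + 1)) (c * r / (1 - (1 - c) * r)) := by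
  have hterm : (fun k : ℕ => (1 - c) ^ k * c * r ^ (k + 1))
      = fun k => c * r * ((1 - c) * r) ^ k :=
    funext fun k => by rw [mul_pow, pow_succ]; ring
  rw [hterm, div_eq_mul_inv]
  exact (hasSum_geometric_of_lt_one h0 h1).mul_left (c * r)

section PhaseSeries

variable {n : ℕ} {p q : ℝ}

theorem hasSum_phase_drift (hn : 2 ≤ n) (hp0 : 0 < p) (hp1 : p ≤ 1) (hq0 : 0 < q)
    (hq1 : q ≤ 1) (y : ℝ) :
    HasSum (fun ab : ℕ × ℕ => (1 - q) ^ ab.1 * q * ((1 - p) ^ ab.2 * p) *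
        (y - (1 - 1 / n : ℝ) ^ (ab.2 + 1) * ((1 - 2 / n : ℝ) ^ (ab.1 + 1) * (y - n / 2) + n / 2)))
      (y - p * (1 - 1 / n) / (1 - (1 - p) * (1 - 1 / n))
        * (q * (1 - 2 / n) / (1 - (1 - q) * (1 - 2 / n)) * (y - n / 2) + n / 2)) := by
  have hn' : (2 : ℝ) ≤ n := by exact_mod_cast hn
  have hweight : ∀ {c r : ℝ}, 0 < c → c ≤ 1 → 0 ≤ r → r ≤ 1 →
      HasSum (fun k : ℕ => (1 - c) ^ k * c * r ^ (k + 1)) (c * r / (1 - (1 - c) * r)) ∧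
        0 ≤ fun k : ℕ => (1 - c) ^ k * c * r ^ (k + 1) := fun hc0 hc1 hr0 hr1 =>
    ⟨hasSum_geometric_weight (mul_nonneg (sub_nonneg.2 hc1) hr0)
        ((mul_le_of_le_one_right (sub_nonneg.2 hc1) hr1).trans_lt (sub_lt_self 1 hc0)),
      fun k => mul_nonneg (mul_nonneg (pow_nonneg (sub_nonneg.2 hc1) _) hc0.le) (pow_nonneg hr0 _)⟩
  have hr1 : 0 ≤ (1 - 1 / n : ℝ) := by
    rw [sub_nonneg, div_le_one (by linarith)]
    linarith
  have hr2 : 0 ≤ (1 - 2 / n : ℝ) := by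
    rw [sub_nonneg, div_le_one (by linarith)]
    exact hn'
  obtain ⟨hU, hU0⟩ := hweight hq0 hq1 zero_le_one le_rfl
  obtain ⟨hV, hV0⟩ := hweight hp0 hp1 zero_le_one le_rfl
  obtain ⟨hA, hA0⟩ := hweight hq0 hq1 hr2 (by linarith [show (0 : ℝ) ≤ 2 / n by positivity])
  obtain ⟨hB, hB0⟩ := hweight hp0 hp1 hr1 (by linarith [show (0 : ℝ) ≤ 1 / n by positivity])
  rw [mul_one, mul_one, sub_sub_cancel, div_self hq0.ne'] at hU
  rw [mul_one, mul_one, sub_sub_cancel, div_self hp0.ne'] at hV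
  set A := q * (1 - 2 / n) / (1 - (1 - q) * (1 - 2 / n : ℝ))
  set B := p * (1 - 1 / n) / (1 - (1 - p) * (1 - 1 / n : ℝ))
  rw [show y - B * (A * (y - n / 2) + n / 2) = y * (1 * 1) - (y - n / 2) * (A * B)
    - n / 2 * (1 * B) by ring]
  exact ((((hasSum_mul_of_nonneg hU hV hU0 hV0).mul_left y).sub
    ((hasSum_mul_of_nonneg hA hB hA0 hB0).mul_left (y - n / 2))).sub
      ((hasSum_mul_of_nonneg hU hB hU0 hB0).mul_left ((n : ℝ) / 2))).congr_fun fun ab => by ring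

theorem phase_drift_closed_form (hn : 2 ≤ n) (hp0 : 0 < p) (hq0 : 0 < q) (y : ℝ) :
    y - p * (1 - 1 / n) / (1 - (1 - p) * (1 - 1 / n))
        * (q * (1 - 2 / n) / (1 - (1 - q) * (1 - 2 / n)) * (y - n / 2) + n / 2)
      = (2 * y - n) / (2 + q * (n - 2))
        + (y - (2 * y - n) / (2 + q * (n - 2))) / (1 + p * (n - 1)) := by
  have hn' : (2 : ℝ) ≤ n := by exact_mod_cast hn
  have hA : 1 - (1 - q) * (1 - 2 / n : ℝ) = (2 + q * (n - 2)) / n := by field_simp; ring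
  have hB : 1 - (1 - p) * (1 - 1 / n : ℝ) = (1 + p * (n - 1)) / n := by field_simp; ring
  have hA0 : (0 : ℝ) < 2 + q * (n - 2) := by nlinarith
  have hB0 : (0 : ℝ) < 1 + p * (n - 1) := by nlinarith
  rw [hA, hB]
  field_simp
  ring

end PhaseSeries

theorem drift_am_oi_phase_general (n : ℕ) (hn : 2 ≤ n) (p q : ℝ)
    (hp0 : 0 < p) (hp1 : p < 1) (hq0 : 0 < q) (hq1 : q < 1)
    (i : ℕ) (x0 : Point n) (hx0 : n - ones x0 = i)
    (Ω : Type) [MeasurableSpace Ω] (μ : Measure Ω) (X : ℕ → Ω → Point n × Op)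
    (hprob : IsProbabilityMeasure μ) (hchain : IsMMAHH μ X (OneMax n) p q)
    (hinit : μ {ω | X 0 ω = (x0, Op.AM)} = 1) :
    ∫ ω, (((n : ℝ) - (ones (X 0 ω).1 : ℝ)) -
        ((n : ℝ) - (ones (X (switchTime X 2 ω) ω).1 : ℝ))) ∂μ
      = (2 * (i : ℝ) - (n : ℝ)) / (2 + q * ((n : ℝ) - 2)) +
        ((i : ℝ) - (2 * (i : ℝ) - (n : ℝ)) / (2 + q * ((n : ℝ) - 2))) /
          (1 + p * ((n : ℝ) - 1)) := by
  have : NeZero n := ⟨by omega⟩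
  have hX := hchain.1
  have hgap : gap x0 = i := by rw [gap, ← hx0, Nat.cast_sub (ones_le x0)]
  refine (hasSum_setIntegral_phaseSet hX
    ((ae_eq_initial hX hinit).mono fun ω h => by rw [h])).unique ?_
  rw [← hgap, ← phase_drift_closed_form hn hp0 hq0]
  exact (hasSum_phase_drift hn hp0 hp1.le hq0 hq1.le (gap x0)).congr_fun
    (setIntegral_phaseSet_drift hchain hinit hp0.le hp1.le hq0.le hq1.le)

/-- Drift over a pair of phases AM+OI on OneMax (Lemma 7 of the paper). -/
theorem drift_am_oi_phase (n : ℕ) (hn : 2 ≤ n) (p q : ℝ)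
    (hp0 : 0 < p) (hp1 : p < 1) (hq0 : 0 < q) (hq1 : q < 1)
    (i : ℕ) (hi : i ≤ n) (x0 : Point n) (hx0 : n - ones x0 = i)
    (Ω : Type) [MeasurableSpace Ω] (μ : Measure Ω) (X : ℕ → Ω → Point n × Op)
    (hprob : IsProbabilityMeasure μ) (hchain : IsMMAHH μ X (OneMax n) p q)
    (hinit : μ {ω | X 0 ω = (x0, Op.AM)} = 1) :
    ∫ ω, (((n : ℝ) - (ones (X 0 ω).1 : ℝ)) -
        ((n : ℝ) - (ones (X (switchTime X 2 ω) ω).1 : ℝ))) ∂μ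
      = (2 * (i : ℝ) - (n : ℝ)) / (2 + q * ((n : ℝ) - 2)) +
        ((i : ℝ) - (2 * (i : ℝ) - (n : ℝ)) / (2 + q * ((n : ℝ) - 2))) /
          (1 + p * ((n : ℝ) - 1)) :=
  drift_am_oi_phase_general n hn p q hp0 hp1 hq0 hq1 i x0 hx0 Ω μ X hprob hchain hinit
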